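/- arXiv:1604.03897 — 2 statements merged into one kernel-verified Lean document; each statement's English description precedes it below -/
import Mathlib

section
/- Duhamel's formula: if A and B are endomorphisms of a finite-dimensional complex normed vector space V, then exp(−B) − exp(−A) = −∫₀¹ exp(−sA)·(B−A)·exp(−(1−s)B) ds, where the integral is the Bochner integral in End(V); equivalently, for every s ∈ [0,1] the derivative in s of exp(−sA)·exp(−(1−s)B) equals exp(−sA)·(B−A)·exp(−(1−s)B). -/
/-!
Differentiate `u ↦ exp(-uA) exp(-(1-u)B)` by the product rule: the two factors contribute
`-exp(-uA) A exp(-(1-u)B)` and `exp(-uA) B exp(-(1-u)B)`, since `B` commutes with `exp(-(1-u)B)`.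
The integral formula is then the fundamental theorem of calculus on `[0, 1]`.
-/

open NormedSpace

section

variable {𝔸 : Type*} [NormedRing 𝔸] [NormedAlgebra ℝ 𝔸] [CompleteSpace 𝔸]

theorem hasDerivAt_exp_neg_smul (A : 𝔸) (s : ℝ) :
    HasDerivAt (fun u : ℝ => exp (-(u • A))) (exp (-(s • A)) * -A) s := by
  simpa only [← smul_neg] using hasDerivAt_exp_smul_const (-A) s

theorem hasDerivAt_exp_neg_one_sub_smul (B : 𝔸) (s : ℝ) :
    HasDerivAt (fun u : ℝ => exp (-((1 - u) • B))) (B * exp (-((1 - s) • B))) s := by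
  have := (hasDerivAt_exp_smul_const' (-B) (1 - s)).scomp s ((hasDerivAt_id s).const_sub 1)
  simpa only [smul_neg, Function.comp_def, neg_smul, one_smul, neg_mul, neg_neg] using this

theorem hasDerivAt_exp_neg_smul_mul_exp_neg_one_sub_smul (A B : 𝔸) (s : ℝ) :
    HasDerivAt (fun u : ℝ => exp (-(u • A)) * exp (-((1 - u) • B)))
      (exp (-(s • A)) * (B - A) * exp (-((1 - s) • B))) s := by
  refine ((hasDerivAt_exp_neg_smul A s).mul (hasDerivAt_exp_neg_one_sub_smul B s)).congr_deriv ?_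
  noncomm_ring

theorem continuous_exp_neg_smul_mul_mul_exp_neg_one_sub_smul (A B C : 𝔸) :
    Continuous fun s : ℝ => exp (-(s • A)) * C * exp (-((1 - s) • B)) :=
  continuous_iff_continuousAt.2 fun s =>
    ((hasDerivAt_exp_neg_smul A s).continuousAt.mul continuousAt_const).mul
      (hasDerivAt_exp_neg_one_sub_smul B s).continuousAt

theorem integral_exp_neg_smul_mul_sub_mul_exp_neg_one_sub_smul (A B : 𝔸) :
    ∫ s in (0 : ℝ)..1, exp (-(s • A)) * (B - A) * exp (-((1 - s) • B)) =
      exp (-A) - exp (-B) := by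
  have := intervalIntegral.integral_eq_sub_of_hasDerivAt
    (fun s _ => hasDerivAt_exp_neg_smul_mul_exp_neg_one_sub_smul A B s)
    ((continuous_exp_neg_smul_mul_mul_exp_neg_one_sub_smul A B _).intervalIntegrable 0 1)
  simpa using this

end

/-- **Duhamel's formula.** For endomorphisms `A`, `B` of a finite-dimensional complex
normed vector space `V`, one has
`exp(−B) − exp(−A) = −∫₀¹ exp(−sA)·(B−A)·exp(−(1−s)B) ds`
(Bochner/interval integral in `End(V)`); equivalently, for every `s ∈ [0,1]` the
derivative in `s` of `exp(−sA)·exp(−(1−s)B)` is `exp(−sA)·(B−A)·exp(−(1−s)B)`. -/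
theorem duhamel_formula {V : Type*} [NormedAddCommGroup V] [NormedSpace ℂ V]
    [FiniteDimensional ℂ V] (A B : V →L[ℂ] V) :
    (NormedSpace.exp (-B) - NormedSpace.exp (-A) =
      -∫ s in (0:ℝ)..1,
        NormedSpace.exp (-(s • A)) * (B - A) * NormedSpace.exp (-((1 - s) • B))) ∧
    (∀ s ∈ Set.Icc (0:ℝ) 1,
      HasDerivAt
        (fun u : ℝ => NormedSpace.exp (-(u • A)) * NormedSpace.exp (-((1 - u) • B)))
        (NormedSpace.exp (-(s • A)) * (B - A) * NormedSpace.exp (-((1 - s) • B))) s) :=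
  ⟨(neg_sub _ _).symm.trans
      (congrArg Neg.neg (integral_exp_neg_smul_mul_sub_mul_exp_neg_one_sub_smul A B).symm),
    fun s _ => hasDerivAt_exp_neg_smul_mul_exp_neg_one_sub_smul A B s⟩
end

section
/- The majorizing quadratic form q_z is positive definite: given a Q-polarized Hodge structure z of even weight w on V, for v ∈ V write v^{p,q} for the component of v in V^{p,q} and set v_z := Σ_{p > w/2} v^{p,q} and h_z(v) := 2·Q(C v_z, conj(v_z)). Then the quadratic form q_z(v) := (1/2)·Q(v,v) + h_z(v) on the real vector space V is positive definite. -/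
noncomputable section

/-- Data exhibiting the complex vector space `W` as the complexification `V_ℂ` of the
real vector space `V`: a real embedding `ι`, and a complex conjugation `conj` (a
real-linear, antilinear involution) whose fixed points are exactly `ι(V)`, with
`W = ι(V) ⊕ i·ι(V)`. -/
structure Complexification (V W : Type*) [AddCommGroup V] [Module ℝ V]
    [AddCommGroup W] [Module ℂ W] where
  ι : V →ₗ[ℝ] W
  conj : W →ₗ[ℝ] W
  conj_conj : ∀ x, conj (conj x) = x
  conj_smul : ∀ (a : ℂ) (x : W), conj (a • x) = (starRingEnd ℂ a) • conj x
  conj_ι : ∀ v, conj (ι v) = ι v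
  ι_injective : Function.Injective ι
  exists_re_im : ∀ x : W, ∃ v₁ v₂ : V, x = ι v₁ + Complex.I • ι v₂
  fixed_eq_range : ∀ x : W, conj x = x → ∃ v, x = ι v

/-- A `Q`-polarized Hodge structure of weight `w` on `V`, presented as the family of
Hodge subspaces `Vpq p = V^{p,w-p}` of the complexification `W = V_ℂ`:
`W = ⊕_{p+q=w} V^{p,q}`, conjugation maps `V^{p,q}` into `V^{q,p}`,
`Q(V^{p,q},V^{p',q'}) = 0` unless `p' = w − p`, and `i^{p−q}·Q(u, conj u) > 0` for
`0 ≠ u ∈ V^{p,q}` (here `i^{p-q} = i^p·(−i)^q`). -/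
structure IsPolarizedHodgeStructure {V W : Type*} [AddCommGroup V] [Module ℝ V]
    [AddCommGroup W] [Module ℂ W] (c : Complexification V W)
    (QC : W →ₗ[ℂ] W →ₗ[ℂ] ℂ) (w : ℕ) (Vpq : ℕ → Submodule ℂ W) : Prop where
  isInternal : DirectSum.IsInternal fun p : Fin (w + 1) => Vpq (p : ℕ)
  bot_of_gt : ∀ p, w < p → Vpq p = ⊥
  conj_mem : ∀ p, ∀ x ∈ Vpq p, c.conj x ∈ Vpq (w - p)
  isotropic : ∀ p p', p + p' ≠ w → ∀ x ∈ Vpq p, ∀ y ∈ Vpq p', QC x y = 0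
  positivity : ∀ p, ∀ x ∈ Vpq p, x ≠ 0 →
    ∃ r : ℝ, 0 < r ∧ (Complex.I ^ p * (-Complex.I) ^ (w - p)) * QC x (c.conj x) = (r : ℂ)

/-! Write `v^{p,q}` for the Hodge components of the real vector `v`. Conjugation swaps `v^{p,q}` and
`v^{q,p}`, so by isotropy `Q(v,v) = Σ_p Q(v^{p,q}, conj v^{p,q})`, while
`h_z(v) = 2 Σ_{p > w/2} a_p` with `a_p = i^{p-q} Q(v^{p,q}, conj v^{p,q}) ≥ 0`. As `w` is even,
`i^{p-q} = ±1`, so the `p`-th summand of `Q(v,v)` is `±a_p`, and the symmetry `p ↔ q` gives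
`q_z(v) = a_{w/2}/2 + Σ_{p > w/2} (2 ± 1) a_p`, which is positive since some `a_p` with
`p ≥ w/2` is. -/

open Finset Complex

theorem Finset.sum_range_eq_add_two_nsmul_sum_Ioc_of_symm {M : Type*} [AddCommMonoid M]
    (m : ℕ) (f : ℕ → M) (hf : ∀ p ≤ m + m, f (m + m - p) = f p) :
    ∑ p ∈ range (m + m + 1), f p = f m + 2 • ∑ p ∈ Ioc m (m + m), f p := by
  have hlow : ∑ p ∈ range m, f p = ∑ p ∈ Ioc m (m + m), f p := by
    rw [← Ico_add_one_add_one_eq_Ioc, ← Nat.Ico_zero_eq_range]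
    have := sum_Ico_reflect f (m + 1) (n := m + m) (m := m + m + 1) le_rfl
    rw [show m + m + 1 - (m + m + 1) = 0 by omega, show m + m + 1 - (m + 1) = m by omega] at this
    rw [← this]
    exact sum_congr rfl fun p hp => hf p (by simp at hp; omega)
  rw [range_eq_Ico, ← sum_Ico_consecutive _ (Nat.zero_le (m + 1)) (by omega : m + 1 ≤ m + m + 1),
    sum_Ico_succ_top (Nat.zero_le m), Nat.Ico_zero_eq_range, hlow, Ico_add_one_add_one_eq_Ioc,
    two_nsmul]
  abel

theorem Complex.I_pow_mul_neg_I_pow_of_add_eq {p q m : ℕ} (h : p + q = m + m) :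
    I ^ p * (-I) ^ q = ((-1) ^ (q + m) : ℝ) := by
  have hI : I ^ p * I ^ q = (-1) ^ m := by rw [← pow_add, h, ← two_mul, pow_mul, I_sq]
  push_cast
  rw [neg_pow, pow_add, ← hI]
  ring

theorem Complex.eq_neg_one_pow_mul_of_I_pow_mul_neg_I_pow_mul_eq {p q m : ℕ} (h : p + q = m + m)
    {z : ℂ} {r : ℝ} (hz : I ^ p * (-I) ^ q * z = r) : z = ((-1) ^ (q + m) * r : ℝ) := by
  rw [I_pow_mul_neg_I_pow_of_add_eq h] at hz
  rw [ofReal_mul, ← hz, ← mul_assoc, ← ofReal_mul, ← mul_pow]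
  norm_num

theorem half_mul_add_sum_sign_mul_add_sum_pos {S : Finset ℕ} {a₀ : ℝ} {a ε : ℕ → ℝ}
    (ha₀ : 0 ≤ a₀) (ha : ∀ p ∈ S, 0 ≤ a p) (hε : ∀ p ∈ S, ε p = 1 ∨ ε p = -1)
    (hpos : 0 < a₀ ∨ ∃ p ∈ S, 0 < a p) :
    0 < 1 / 2 * (a₀ + 2 * ∑ p ∈ S, ε p * a p) + 2 * ∑ p ∈ S, a p := by
  have hterm : ∀ p ∈ S, a p ≤ ε p * a p + 2 * a p := by
    intro p hp
    rcases hε p hp with h | h <;> rw [h] <;> linarith [ha p hp]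
  have hsum : ∑ p ∈ S, a p ≤ ∑ p ∈ S, ε p * a p + 2 * ∑ p ∈ S, a p := by
    rw [mul_sum, ← sum_add_distrib]
    exact sum_le_sum hterm
  have hS : 0 ≤ ∑ p ∈ S, a p := sum_nonneg ha
  rcases hpos with h | ⟨q, hq, h⟩
  · linarith
  · linarith [sum_pos' ha ⟨q, hq, h⟩]

namespace Complexification

variable {V W : Type*} [AddCommGroup V] [Module ℝ V] [AddCommGroup W] [Module ℂ W]
  (c : Complexification V W)

theorem conj_injective : Function.Injective c.conj :=
  Function.Involutive.injective c.conj_conj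

theorem form_comm_of_comm_on_ι (QC : W →ₗ[ℂ] W →ₗ[ℂ] ℂ)
    (h : ∀ u v, QC (c.ι u) (c.ι v) = QC (c.ι v) (c.ι u)) (x y : W) : QC x y = QC y x := by
  obtain ⟨u₁, u₂, rfl⟩ := c.exists_re_im x
  obtain ⟨v₁, v₂, rfl⟩ := c.exists_re_im y
  simp only [map_add, map_smul, LinearMap.add_apply, LinearMap.smul_apply, smul_eq_mul,
    h u₁ v₁, h u₁ v₂, h u₂ v₁, h u₂ v₂]
  ring

end Complexification

namespace IsPolarizedHodgeStructure

variable {V W : Type*} [AddCommGroup V] [Module ℝ V] [AddCommGroup W] [Module ℂ W]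
  {c : Complexification V W} {QC : W →ₗ[ℂ] W →ₗ[ℂ] ℂ} {w : ℕ} {Vpq : ℕ → Submodule ℂ W}

theorem conj_component_eq (hz : IsPolarizedHodgeStructure c QC w Vpq) {v : V} {comp : ℕ → W}
    (hcomp : ∀ p, comp p ∈ Vpq p) (hsum : c.ι v = ∑ p ∈ range (w + 1), comp p)
    {p : ℕ} (hp : p ≤ w) : c.conj (comp p) = comp (w - p) := by
  have hreflect : ∑ p ∈ range (w + 1), comp p = ∑ p ∈ range (w + 1), c.conj (comp (w - p)) := by
    rw [← map_sum, (by simpa using sum_range_reflect comp (w + 1) :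
      ∑ p ∈ range (w + 1), comp (w - p) = ∑ p ∈ range (w + 1), comp p), ← hsum, c.conj_ι]
  have hunique := (iSupIndep_iff_finsetSum_eq_imp_eq _).mp hz.isInternal.submodule_iSupIndep univ
    (fun i : Fin (w + 1) => comp i) (fun i => c.conj (comp (w - i)))
    (fun i _ => ⟨hcomp i,
      by simpa only [Nat.sub_sub_self (Fin.is_le i)] using hz.conj_mem _ _ (hcomp (w - i))⟩)
    (by simpa only [Fin.sum_univ_eq_sum_range (fun p => comp p),
      Fin.sum_univ_eq_sum_range (fun p => c.conj (comp (w - p)))] using hreflect)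
    ⟨w - p, by omega⟩ (mem_univ _)
  simpa [Nat.sub_sub_self hp] using hunique.symm

theorem apply_sum_sum_eq (hz : IsPolarizedHodgeStructure c QC w Vpq) {S : Finset ℕ}
    (hS : ∀ p ∈ S, p ≤ w) {x y : ℕ → W} (hx : ∀ p ∈ S, x p ∈ Vpq p)
    (hy : ∀ p ∈ S, y p ∈ Vpq (w - p)) :
    QC (∑ p ∈ S, x p) (∑ q ∈ S, y q) = ∑ p ∈ S, QC (x p) (y p) := by
  rw [map_sum QC, LinearMap.coe_sum, Finset.sum_apply]
  refine sum_congr rfl fun p hp => ?_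
  rw [map_sum]
  refine sum_eq_single_of_mem p hp fun q hq hqp => ?_
  have := hS q hq
  exact hz.isotropic p (w - q) (by omega) _ (hx p hp) _ (hy q hq)

theorem apply_ι_ι_eq_sum (hz : IsPolarizedHodgeStructure c QC w Vpq) {v : V} {comp : ℕ → W}
    (hcomp : ∀ p, comp p ∈ Vpq p) (hsum : c.ι v = ∑ p ∈ range (w + 1), comp p) :
    QC (c.ι v) (c.ι v) = ∑ p ∈ range (w + 1), QC (comp p) (c.conj (comp p)) := by
  nth_rewrite 2 [← c.conj_ι v]
  rw [hsum, map_sum c.conj]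
  exact hz.apply_sum_sum_eq (fun p hp => Nat.lt_succ_iff.mp (mem_range.mp hp))
    (fun p _ => hcomp p) (fun p _ => hz.conj_mem p _ (hcomp p))

theorem apply_weil_sum_conj_sum_eq (hz : IsPolarizedHodgeStructure c QC w Vpq)
    {C : W →ₗ[ℂ] W} (hC : ∀ p, ∀ x ∈ Vpq p, C x = (I ^ p * (-I) ^ (w - p)) • x)
    {S : Finset ℕ} (hS : ∀ p ∈ S, p ≤ w) {comp : ℕ → W} (hcomp : ∀ p, comp p ∈ Vpq p) :
    QC (C (∑ p ∈ S, comp p)) (c.conj (∑ p ∈ S, comp p)) =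
      ∑ p ∈ S, I ^ p * (-I) ^ (w - p) * QC (comp p) (c.conj (comp p)) := by
  rw [map_sum C, map_sum c.conj, hz.apply_sum_sum_eq hS
    (fun p _ => hC p _ (hcomp p) ▸ (Vpq p).smul_mem _ (hcomp p))
    (fun p _ => hz.conj_mem p _ (hcomp p))]
  refine sum_congr rfl fun p _ => ?_
  rw [hC p _ (hcomp p), map_smul, LinearMap.smul_apply, smul_eq_mul]

theorem exists_weil_mul_apply_conj_eq (hz : IsPolarizedHodgeStructure c QC w Vpq) {p : ℕ}
    {x : W} (hx : x ∈ Vpq p) :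
    ∃ r : ℝ, 0 ≤ r ∧ I ^ p * (-I) ^ (w - p) * QC x (c.conj x) = r ∧ (x ≠ 0 → 0 < r) := by
  by_cases h0 : x = 0
  · exact ⟨0, le_rfl, by simp [h0], fun h => absurd h0 h⟩
  · obtain ⟨r, hr, hE⟩ := hz.positivity p x hx h0
    exact ⟨r, hr.le, hE, fun _ => hr⟩

theorem apply_ι_ι_eq_add_two_mul_sum_Ioc {m : ℕ} (hz : IsPolarizedHodgeStructure c QC (m + m) Vpq)
    (hsymm : ∀ x y, QC x y = QC y x) {v : V} {comp : ℕ → W} (hcomp : ∀ p, comp p ∈ Vpq p)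
    (hsum : c.ι v = ∑ p ∈ range (m + m + 1), comp p) :
    QC (c.ι v) (c.ι v) = QC (comp m) (c.conj (comp m)) +
      2 * ∑ p ∈ Ioc m (m + m), QC (comp p) (c.conj (comp p)) := by
  rw [hz.apply_ι_ι_eq_sum hcomp hsum,
    sum_range_eq_add_two_nsmul_sum_Ioc_of_symm m _ fun p hp => ?_, two_nsmul, two_mul]
  rw [← hz.conj_component_eq hcomp hsum hp, c.conj_conj, hsymm]

theorem component_ne_zero_of_ne_zero (hz : IsPolarizedHodgeStructure c QC w Vpq) {v : V}
    (hv : v ≠ 0) {comp : ℕ → W} (hcomp : ∀ p, comp p ∈ Vpq p)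
    (hsum : c.ι v = ∑ p ∈ range (w + 1), comp p) :
    comp (w / 2) ≠ 0 ∨ ∃ p ∈ Ioc (w / 2) w, comp p ≠ 0 := by
  obtain ⟨p, hp, hp0⟩ : ∃ p ∈ range (w + 1), comp p ≠ 0 := by
    by_contra! h
    exact hv (c.ι_injective (by rw [hsum, sum_eq_zero h, map_zero]))
  have hpw : p ≤ w := Nat.lt_succ_iff.mp (mem_range.mp hp)
  obtain ⟨q, hq, hqw, hq0⟩ : ∃ q, w / 2 ≤ q ∧ q ≤ w ∧ comp q ≠ 0 := by
    by_cases hhalf : w / 2 ≤ p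
    · exact ⟨p, hhalf, hpw, hp0⟩
    · refine ⟨w - p, by omega, by omega, ?_⟩
      rw [← hz.conj_component_eq hcomp hsum hpw]
      exact (c.conj_injective.ne_iff' (map_zero _)).mpr hp0
  rcases hq.eq_or_lt with rfl | hlt
  · exact Or.inl hq0
  · exact Or.inr ⟨q, mem_Ioc.mpr ⟨hlt, hqw⟩, hq0⟩

end IsPolarizedHodgeStructure

theorem majorant_form_positive_definite_general
    {V W : Type*} [AddCommGroup V] [Module ℝ V]
    [AddCommGroup W] [Module ℂ W]
    (c : Complexification V W)
    (Q : LinearMap.BilinForm ℝ V) (hQsymm : ∀ u v, Q u v = Q v u)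
    (QC : W →ₗ[ℂ] W →ₗ[ℂ] ℂ) (hQC : ∀ u v : V, QC (c.ι u) (c.ι v) = (Q u v : ℂ))
    (w : ℕ) (hweven : Even w)
    (Vpq : ℕ → Submodule ℂ W)
    (hz : IsPolarizedHodgeStructure c QC w Vpq)
    (C : W →ₗ[ℂ] W)
    (hC : ∀ p, ∀ x ∈ Vpq p, C x = (Complex.I ^ p * (-Complex.I) ^ (w - p)) • x) :
    ∀ v : V, v ≠ 0 → ∀ comp : ℕ → W,
      (∀ p, comp p ∈ Vpq p) →
      c.ι v = ∑ p ∈ Finset.range (w + 1), comp p →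
      ∃ r : ℝ,
        2 * QC (C (∑ p ∈ Finset.Ioc (w / 2) w, comp p))
            (c.conj (∑ p ∈ Finset.Ioc (w / 2) w, comp p)) = (r : ℂ) ∧
        0 < (1 / 2 : ℝ) * Q v v + r := by
  intro v hv comp hcomp hsum
  obtain ⟨m, rfl⟩ := hweven
  have hnz := hz.component_ne_zero_of_ne_zero hv hcomp hsum
  rw [show (m + m) / 2 = m by omega] at hnz ⊢
  have hIoc : ∀ p ∈ Ioc m (m + m), p ≤ m + m := fun p hp => (mem_Ioc.mp hp).2
  choose a ha₀ ha hapos using fun p => hz.exists_weil_mul_apply_conj_eq (hcomp p)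
  have hb : ∀ p ≤ m + m,
      QC (comp p) (c.conj (comp p)) = (((-1) ^ (m + m - p + m) * a p : ℝ) : ℂ) := fun p hp =>
    eq_neg_one_pow_mul_of_I_pow_mul_neg_I_pow_mul_eq (by omega) (ha p)
  have hsymm := c.form_comm_of_comm_on_ι QC fun u v => by rw [hQC, hQC, hQsymm]
  have hQvv : Q v v = a m + 2 * ∑ p ∈ Ioc m (m + m), (-1) ^ (m + m - p + m) * a p := by
    have h := hQC v v
    rw [hz.apply_ι_ι_eq_add_two_mul_sum_Ioc hsymm hcomp hsum, hb m le_add_self,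
      sum_congr rfl fun p hp => hb p (hIoc p hp), Nat.add_sub_cancel, Even.neg_one_pow ⟨m, rfl⟩,
      one_mul] at h
    exact_mod_cast h.symm
  refine ⟨2 * ∑ p ∈ Ioc m (m + m), a p, ?_, ?_⟩
  · rw [hz.apply_weil_sum_conj_sum_eq hC hIoc hcomp, sum_congr rfl fun p _ => ha p]
    norm_cast
  rw [hQvv]
  exact half_mul_add_sum_sign_mul_add_sum_pos (ha₀ m) (fun p _ => ha₀ p)
    (fun p _ => neg_one_pow_eq_or ℝ _)
    (hnz.imp (hapos m) (Exists.imp fun p => And.imp_right (hapos p)))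

/-- **Positive definiteness of the majorizing quadratic form `q_z`.** Given a
`Q`-polarized Hodge structure `z` of even weight `w` on `V` with Weil operator `C`, for
`v ∈ V` with Hodge components `comp p ∈ V^{p,w-p}`, set `v_z = Σ_{p > w/2} comp p` and
`h_z(v) = 2·Q(C v_z, conj v_z)`. Then `q_z(v) = (1/2)·Q(v,v) + h_z(v)` is real and
positive for every `v ≠ 0`. -/
theorem majorant_form_positive_definite
    {V W : Type*} [AddCommGroup V] [Module ℝ V] [FiniteDimensional ℝ V]
    [AddCommGroup W] [Module ℂ W]
    (c : Complexification V W)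
    (Q : LinearMap.BilinForm ℝ V) (hQsymm : ∀ u v, Q u v = Q v u)
    (hQnd : Q.Nondegenerate)
    (QC : W →ₗ[ℂ] W →ₗ[ℂ] ℂ) (hQC : ∀ u v : V, QC (c.ι u) (c.ι v) = (Q u v : ℂ))
    (w : ℕ) (hw : 0 < w) (hweven : Even w)
    (Vpq : ℕ → Submodule ℂ W)
    (hz : IsPolarizedHodgeStructure c QC w Vpq)
    (C : W →ₗ[ℂ] W)
    (hC : ∀ p, ∀ x ∈ Vpq p, C x = (Complex.I ^ p * (-Complex.I) ^ (w - p)) • x) :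
    ∀ v : V, v ≠ 0 → ∀ comp : ℕ → W,
      (∀ p, comp p ∈ Vpq p) →
      c.ι v = ∑ p ∈ Finset.range (w + 1), comp p →
      ∃ r : ℝ,
        2 * QC (C (∑ p ∈ Finset.Ioc (w / 2) w, comp p))
            (c.conj (∑ p ∈ Finset.Ioc (w / 2) w, comp p)) = (r : ℂ) ∧
        0 < (1 / 2 : ℝ) * Q v v + r :=
  majorant_form_positive_definite_general c Q hQsymm QC hQC w hweven Vpq hz C hC
end
end
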